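/- Let L ⊆ ℚ̄ × ℚ̄ satisfy the slice dichotomy, the unknot condition, and the no-zero condition, and suppose there exist natural numbers b₁, b₂ such that for all integers p₁, p₂ one has ((p₁ : ℚ), (p₂ : ℚ)) ∈ L if and only if p₁ ≥ 2b₁ + 1 and p₂ ≥ 2b₂ + 1. Then L = ([2b₁+1, ∞] × [2b₂+1, ∞]) ∪ ({∞} × Q*) ∪ (Q* × {∞}), where Q* = {q ∈ ℚ : q ≠ 0} ⊆ ℚ̄. -/

import Mathlib

/-- The interval `[k,∞] = {∞} ∪ {q : k ≤ q}` in `ℚ̄ = ℚ ∪ {∞}` (`∞ = none`). -/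
def infSlice (k : ℤ) : Set (Option ℚ) :=
  {none} ∪ {x | ∃ q : ℚ, x = some q ∧ (k : ℚ) ≤ q}

/-- The interval `[∞,−k] = {∞} ∪ {q : q ≤ −k}` in `ℚ̄`. -/
def negSlice (k : ℤ) : Set (Option ℚ) :=
  {none} ∪ {x | ∃ q : ℚ, x = some q ∧ q ≤ -(k : ℚ)}

/-- A subset of `ℚ̄` is a standard slice if it is `ℚ̄ \ {0}`, or `[k,∞]`,
or `[∞,−k]` for some positive integer `k`. -/
def StandardSlice (I : Set (Option ℚ)) : Prop :=
  I = {some 0}ᶜ ∨ (∃ k : ℤ, 0 < k ∧ I = infSlice k) ∨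
    (∃ k : ℤ, 0 < k ∧ I = negSlice k)

/-- `L` satisfies the slice dichotomy if every horizontal or vertical slice of
`L` with at least two elements is a standard slice. -/
def SliceDichotomy (L : Set (Option ℚ × Option ℚ)) : Prop :=
  ∀ r : Option ℚ,
    ({s | (r, s) ∈ L}.Nontrivial → StandardSlice {s | (r, s) ∈ L}) ∧
    ({s | (s, r) ∈ L}.Nontrivial → StandardSlice {s | (s, r) ∈ L})

/-- `L` satisfies the unknot condition if `(∞,s) ∈ L` and `(s,∞) ∈ L` for
every `s ∈ ℚ̄` with `s ≠ 0`. -/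
def UnknotCondition (L : Set (Option ℚ × Option ℚ)) : Prop :=
  ∀ s : Option ℚ, s ≠ some 0 → (none, s) ∈ L ∧ (s, none) ∈ L

/-- `L` satisfies the no-zero condition if `(r,0) ∉ L` and `(0,r) ∉ L` for
every `r ∈ ℚ̄`. -/
def NoZeroCondition (L : Set (Option ℚ × Option ℚ)) : Prop :=
  ∀ r : Option ℚ, (r, some 0) ∉ L ∧ (some 0, r) ∉ L

/-- The set `Q* = {q ∈ ℚ : q ≠ 0} ⊆ ℚ̄`. -/
def Qstar : Set (Option ℚ) := {x | ∃ q : ℚ, q ≠ 0 ∧ x = some q}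

/-!
Every slice of `L` through a nonzero rational slope contains `∞` by the unknot condition, so as soon
as it contains one more slope it is a standard slice, and a standard slice is pinned down by its
integer points. A vertical slice at an integer `p₂ ≥ 2b₂+1` therefore has the integer points of
`[2b₁+1, ∞]` and is that slice. A rational point `(q₁, q₂) ∈ L` is joined to such a column by its
horizontal slice, which contains an integer `p₂`; then `q₁` lies in the column at `p₂`, so
`q₁ ≥ 2b₁+1`. Conversely a horizontal slice containing the positive slope `2b₂+1` contains every
larger slope.
-/

@[simp]
lemma mem_infSlice_some {k : ℤ} {q : ℚ} : some q ∈ infSlice k ↔ (k : ℚ) ≤ q := by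
  simp [infSlice]

@[simp]
lemma none_mem_infSlice {k : ℤ} : (none : Option ℚ) ∈ infSlice k := Or.inl rfl

@[simp]
lemma mem_negSlice_some {k : ℤ} {q : ℚ} : some q ∈ negSlice k ↔ q ≤ -(k : ℚ) := by
  simp [negSlice]

namespace StandardSlice

variable {I : Set (Option ℚ)}

lemma exists_int_mem (hI : StandardSlice I) : ∃ p : ℤ, some (p : ℚ) ∈ I := by
  rcases hI with rfl | ⟨k, -, rfl⟩ | ⟨k, -, rfl⟩
  · exact ⟨1, by simp⟩
  · exact ⟨k, by simp⟩
  · exact ⟨-k, by simp⟩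

lemma mem_of_le {x y : ℚ} (hI : StandardSlice I) (hx : some x ∈ I) (hx₀ : 0 < x) (hxy : x ≤ y) :
    some y ∈ I := by
  rcases hI with rfl | ⟨k, -, rfl⟩ | ⟨k, hk, rfl⟩
  · simpa using (hx₀.trans_le hxy).ne'
  · simp only [mem_infSlice_some] at hx ⊢
    linarith
  · have : (0 : ℚ) < k := by exact_mod_cast hk
    simp only [mem_negSlice_some] at hx
    linarith

lemma eq_infSlice_of_int {c : ℤ} (hI : StandardSlice I) (hc : 0 < c)
    (hint : ∀ p : ℤ, some (p : ℚ) ∈ I ↔ c ≤ p) : I = infSlice c := by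
  rcases hI with rfl | ⟨k, -, rfl⟩ | ⟨k, hk, rfl⟩
  · have := (hint (-1)).1 (by simp)
    omega
  · have hck : c ≤ k := (hint k).1 (by simp)
    have hkc : k ≤ c := by exact_mod_cast mem_infSlice_some.1 ((hint c).2 le_rfl)
    rw [le_antisymm hkc hck]
  · have := (hint (-k)).1 (by simp)
    omega

end StandardSlice

section Slices

variable {L : Set (Option ℚ × Option ℚ)}

lemma SliceDichotomy.swap (h : SliceDichotomy L) : SliceDichotomy (Prod.swap ⁻¹' L) :=
  fun r => (h r).symm

lemma UnknotCondition.swap (h : UnknotCondition L) : UnknotCondition (Prod.swap ⁻¹' L) :=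
  fun s hs => (h s hs).symm

lemma NoZeroCondition.swap (h : NoZeroCondition L) : NoZeroCondition (Prod.swap ⁻¹' L) :=
  fun r => (h r).symm

lemma NoZeroCondition.ne_zero_right (h : NoZeroCondition L) {r : Option ℚ} {q : ℚ}
    (hq : (r, some q) ∈ L) : q ≠ 0 := by
  rintro rfl
  exact (h r).1 hq

lemma mem_none_some_iff (hunknot : UnknotCondition L) (hnozero : NoZeroCondition L) {q : ℚ} :
    (none, some q) ∈ L ↔ q ≠ 0 :=
  ⟨hnozero.ne_zero_right, fun hq => (hunknot _ (by simpa using hq)).1⟩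

lemma mem_some_none_iff (hunknot : UnknotCondition L) (hnozero : NoZeroCondition L) {q : ℚ} :
    (some q, none) ∈ L ↔ q ≠ 0 :=
  mem_none_some_iff (L := Prod.swap ⁻¹' L) hunknot.swap hnozero.swap

lemma standardSlice_col (hdich : SliceDichotomy L) (hunknot : UnknotCondition L)
    (hnozero : NoZeroCondition L) {t q : ℚ} (h : (some t, some q) ∈ L) :
    StandardSlice {s | (s, some q) ∈ L} :=
  (hdich _).2 ⟨_, h, none, (mem_none_some_iff hunknot hnozero).2 (hnozero.ne_zero_right h), by simp⟩

lemma standardSlice_row (hdich : SliceDichotomy L) (hunknot : UnknotCondition L)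
    (hnozero : NoZeroCondition L) {q t : ℚ} (h : (some q, some t) ∈ L) :
    StandardSlice {s | (some q, s) ∈ L} :=
  standardSlice_col (L := Prod.swap ⁻¹' L) hdich.swap hunknot.swap hnozero.swap h

end Slices

section IntegerThresholds

variable {L : Set (Option ℚ × Option ℚ)} {c₁ c₂ : ℤ}

lemma col_eq_infSlice (hdich : SliceDichotomy L) (hunknot : UnknotCondition L)
    (hnozero : NoZeroCondition L) (hc₁ : 0 < c₁)
    (hint : ∀ p₁ p₂ : ℤ, (some (p₁ : ℚ), some (p₂ : ℚ)) ∈ L ↔ c₁ ≤ p₁ ∧ c₂ ≤ p₂)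
    {p₂ : ℤ} (hp₂ : c₂ ≤ p₂) :
    {s | (s, some (p₂ : ℚ)) ∈ L} = infSlice c₁ :=
  (standardSlice_col hdich hunknot hnozero ((hint c₁ p₂).2 ⟨le_rfl, hp₂⟩)).eq_infSlice_of_int hc₁
    fun p₁ => (hint p₁ p₂).trans (and_iff_left hp₂)

lemma le_left_of_mem (hdich : SliceDichotomy L) (hunknot : UnknotCondition L)
    (hnozero : NoZeroCondition L) (hc₁ : 0 < c₁)
    (hint : ∀ p₁ p₂ : ℤ, (some (p₁ : ℚ), some (p₂ : ℚ)) ∈ L ↔ c₁ ≤ p₁ ∧ c₂ ≤ p₂)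
    {q₁ q₂ : ℚ} (h : (some q₁, some q₂) ∈ L) : (c₁ : ℚ) ≤ q₁ := by
  obtain ⟨p₂, hp₂⟩ := (standardSlice_row hdich hunknot hnozero h).exists_int_mem
  obtain ⟨p₁, hp₁⟩ := (standardSlice_col hdich hunknot hnozero hp₂).exists_int_mem
  have hcol := col_eq_infSlice hdich hunknot hnozero hc₁ hint ((hint p₁ p₂).1 hp₁).2
  exact mem_infSlice_some.1 (hcol ▸ hp₂ : some q₁ ∈ infSlice c₁)

lemma mem_of_le_of_le (hdich : SliceDichotomy L) (hunknot : UnknotCondition L)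
    (hnozero : NoZeroCondition L) (hc₁ : 0 < c₁) (hc₂ : 0 < c₂)
    (hint : ∀ p₁ p₂ : ℤ, (some (p₁ : ℚ), some (p₂ : ℚ)) ∈ L ↔ c₁ ≤ p₁ ∧ c₂ ≤ p₂)
    {q₁ q₂ : ℚ} (hq₁ : (c₁ : ℚ) ≤ q₁) (hq₂ : (c₂ : ℚ) ≤ q₂) : (some q₁, some q₂) ∈ L := by
  have hcorner : (some q₁, some (c₂ : ℚ)) ∈ L := by
    change some q₁ ∈ {s | (s, some (c₂ : ℚ)) ∈ L}
    rw [col_eq_infSlice hdich hunknot hnozero hc₁ hint le_rfl]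
    exact mem_infSlice_some.2 hq₁
  exact (standardSlice_row hdich hunknot hnozero hcorner).mem_of_le hcorner
    (by exact_mod_cast hc₂) hq₂

lemma mem_some_some_iff (hdich : SliceDichotomy L) (hunknot : UnknotCondition L)
    (hnozero : NoZeroCondition L) (hc₁ : 0 < c₁) (hc₂ : 0 < c₂)
    (hint : ∀ p₁ p₂ : ℤ, (some (p₁ : ℚ), some (p₂ : ℚ)) ∈ L ↔ c₁ ≤ p₁ ∧ c₂ ≤ p₂)
    {q₁ q₂ : ℚ} : (some q₁, some q₂) ∈ L ↔ (c₁ : ℚ) ≤ q₁ ∧ (c₂ : ℚ) ≤ q₂ := by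
  refine ⟨fun h => ⟨le_left_of_mem hdich hunknot hnozero hc₁ hint h, ?_⟩,
    fun h => mem_of_le_of_le hdich hunknot hnozero hc₁ hc₂ hint h.1 h.2⟩
  exact le_left_of_mem (L := Prod.swap ⁻¹' L) hdich.swap hunknot.swap hnozero.swap hc₂
    (fun p₁ p₂ => (hint p₂ p₁).trans and_comm) h

end IntegerThresholds

/-- Structure theorem for the set of L-space filling slopes: if `L` satisfies
the slice dichotomy, unknot and no-zero conditions, and its integer points are
exactly those `(p₁, p₂)` with `p₁ ≥ 2b₁+1` and `p₂ ≥ 2b₂+1`, then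
`L = ([2b₁+1,∞] × [2b₂+1,∞]) ∪ ({∞} × Q*) ∪ (Q* × {∞})`. -/
theorem lspace_slope_structure (L : Set (Option ℚ × Option ℚ))
    (hdich : SliceDichotomy L) (hunknot : UnknotCondition L)
    (hnozero : NoZeroCondition L)
    (b₁ b₂ : ℕ)
    (hint : ∀ p₁ p₂ : ℤ,
      (some (p₁ : ℚ), some (p₂ : ℚ)) ∈ L ↔
        (2 * (b₁ : ℤ) + 1 ≤ p₁ ∧ 2 * (b₂ : ℤ) + 1 ≤ p₂)) :
    L = (infSlice (2 * (b₁ : ℤ) + 1) ×ˢ infSlice (2 * (b₂ : ℤ) + 1)) ∪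
        ({none} ×ˢ Qstar) ∪ (Qstar ×ˢ {none}) := by
  have hc₁ : (0 : ℤ) < 2 * b₁ + 1 := by omega
  have hc₂ : (0 : ℤ) < 2 * b₂ + 1 := by omega
  ext ⟨_ | q₁, _ | q₂⟩
  · simpa [Qstar] using (hunknot none (by simp)).1
  · rw [mem_none_some_iff hunknot hnozero]
    simpa [Qstar] using fun h : ((2 * b₂ + 1 : ℤ) : ℚ) ≤ q₂ =>
      (lt_of_lt_of_le (by exact_mod_cast hc₂) h).ne'
  · rw [mem_some_none_iff hunknot hnozero]
    simpa [Qstar] using fun h : ((2 * b₁ + 1 : ℤ) : ℚ) ≤ q₁ =>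
      (lt_of_lt_of_le (by exact_mod_cast hc₁) h).ne'
  · rw [mem_some_some_iff hdich hunknot hnozero hc₁ hc₂ hint]
    simp [Qstar]
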